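/- arXiv:2603.07613 — 2 statements merged into one kernel-verified Lean document; each statement's English description precedes it below -/
import Mathlib

section
/- For p ≥ 2 and all vectors a, b in ℝⁿ, the inequality (|b|^{p-2} b − |a|^{p-2} a) · (b − a) ≥ 2^{2−p} |b − a|^p holds. -/
/-!
With `s = ‖a‖`, `t = ‖b‖` and `w = ‖b - a‖ ^ 2`, the inner product equals
`(t ^ (p - 2) + s ^ (p - 2)) / 2 * w + (t ^ (p - 2) - s ^ (p - 2)) / 2 * (t ^ 2 - s ^ 2)`,
an affine function of `w`, while `2 ^ (2 - p) * w ^ (p / 2)` is convex in `w`. As `w` ranges over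
`[(t - s) ^ 2, (t + s) ^ 2]`, it suffices to compare the two sides at the endpoints, where `a` and
`b` are collinear: for equal directions the bound is the superadditivity of `x ^ (p - 1)`, for
opposite directions the convexity of `x ^ (p - 1)`.
-/

open scoped RealInnerProductSpace

open Set

theorem ConvexOn.le_of_concaveOn_of_mem_segment {𝕜 E β : Type*} [Field 𝕜] [LinearOrder 𝕜]
    [IsStrictOrderedRing 𝕜] [AddCommGroup E] [Module 𝕜 E]
    [AddCommGroup β] [LinearOrder β] [IsOrderedAddMonoid β] [Module 𝕜 β]
    [PosSMulStrictMono 𝕜 β] {s : Set E} {f g : E → β}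
    (hf : ConvexOn 𝕜 s f) (hg : ConcaveOn 𝕜 s g) {x y z : E} (hx : x ∈ s) (hy : y ∈ s)
    (hz : z ∈ segment 𝕜 x y) (hfgx : f x ≤ g x) (hfgy : f y ≤ g y) : f z ≤ g z :=
  sub_nonpos.mp <| ((hf.sub hg).le_on_segment hx hy hz).trans <|
    max_le (sub_nonpos.mpr hfgx) (sub_nonpos.mpr hfgy)

theorem real_inner_smul_sub_smul_sub {E : Type*} [NormedAddCommGroup E] [InnerProductSpace ℝ E]
    (α β : ℝ) (x y : E) :
    ⟪β • y - α • x, y - x⟫ =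
      (β + α) / 2 * ‖y - x‖ ^ 2 + (β - α) / 2 * (‖y‖ ^ 2 - ‖x‖ ^ 2) := by
  simp only [norm_sub_sq_real, inner_sub_left, inner_sub_right, real_inner_smul_left,
    real_inner_self_eq_norm_sq, real_inner_comm x y]
  ring

namespace Real

variable {p s t : ℝ}

theorem rpow_sub_two_mul_self (hp : p ≠ 1) (hs : 0 ≤ s) : s ^ (p - 2) * s = s ^ (p - 1) := by
  rw [← rpow_add_one' hs (by contrapose! hp; linarith)]
  ring_nf

theorem sq_rpow_div_two (hs : 0 ≤ s) : (s ^ 2) ^ (p / 2) = s ^ p := by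
  rw [← rpow_natCast, ← rpow_mul hs]
  ring_nf

theorem abs_sub_rpow_le_rpow_sub_rpow_mul_sub (hp : 2 ≤ p) (hs : 0 ≤ s) (ht : 0 ≤ t) :
    |t - s| ^ p ≤ (t ^ (p - 1) - s ^ (p - 1)) * (t - s) := by
  wlog hst : s ≤ t generalizing s t
  · rw [abs_sub_comm, show (t ^ (p - 1) - s ^ (p - 1)) * (t - s) =
      (s ^ (p - 1) - t ^ (p - 1)) * (s - t) by ring]
    exact this ht hs (by linarith)
  have h0 : 0 ≤ t - s := by linarith
  have hsuper : (t - s) ^ (p - 1) + s ^ (p - 1) ≤ t ^ (p - 1) := by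
    simpa using add_rpow_le_rpow_add h0 hs (by linarith)
  calc |t - s| ^ p = (t - s) ^ (p - 1) * (t - s) := by
        rw [abs_of_nonneg h0, ← rpow_add_one' h0 (by linarith)]
        ring_nf
    _ ≤ (t ^ (p - 1) - s ^ (p - 1)) * (t - s) := by gcongr; linarith

theorem two_rpow_mul_add_rpow_le (hp : 2 ≤ p) (hs : 0 ≤ s) (ht : 0 ≤ t) :
    2 ^ (2 - p) * (t + s) ^ p ≤ (t ^ (p - 1) + s ^ (p - 1)) * (t + s) := by
  have hmean : (t + s) ^ (p - 1) ≤ 2 ^ (p - 2) * (t ^ (p - 1) + s ^ (p - 1)) := by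
    lift t to NNReal using ht
    lift s to NNReal using hs
    have := NNReal.rpow_add_le_mul_rpow_add_rpow t s (p := p - 1) (by linarith)
    rw [show p - 1 - 1 = p - 2 by ring] at this
    exact_mod_cast this
  have htwo : (2 : ℝ) ^ (2 - p) * 2 ^ (p - 2) = 1 := by
    rw [← rpow_add two_pos]
    norm_num
  calc (2 : ℝ) ^ (2 - p) * (t + s) ^ p = 2 ^ (2 - p) * (t + s) ^ (p - 1) * (t + s) := by
        rw [mul_assoc, ← rpow_add_one' (by linarith) (by linarith)]
        ring_nf
    _ ≤ 2 ^ (2 - p) * (2 ^ (p - 2) * (t ^ (p - 1) + s ^ (p - 1))) * (t + s) := by gcongr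
    _ = (t ^ (p - 1) + s ^ (p - 1)) * (t + s) := by rw [← mul_assoc, htwo, one_mul]

theorem two_rpow_mul_rpow_le_of_abs_sub_le_of_le_add {d : ℝ} (hp : 2 ≤ p) (hs : 0 ≤ s)
    (ht : 0 ≤ t) (hd₁ : |t - s| ≤ d) (hd₂ : d ≤ t + s) :
    2 ^ (2 - p) * d ^ p ≤
      (t ^ (p - 2) + s ^ (p - 2)) / 2 * d ^ 2 +
        (t ^ (p - 2) - s ^ (p - 2)) / 2 * (t ^ 2 - s ^ 2) := by
  set B := (t ^ (p - 2) + s ^ (p - 2)) / 2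
  set A := (t ^ (p - 2) - s ^ (p - 2)) / 2 * (t ^ 2 - s ^ 2)
  have hf : ConvexOn ℝ (Ici 0) fun w : ℝ ↦ 2 ^ (2 - p) * w ^ (p / 2) :=
    (convexOn_rpow (by linarith)).smul (by positivity)
  have hg : ConcaveOn ℝ (Ici 0) fun w : ℝ ↦ B * w + A :=
    ((concaveOn_id (convex_Ici 0)).smul (by positivity)).add_const A
  have hw : d ^ 2 ∈ segment ℝ (|t - s| ^ 2) ((t + s) ^ 2) := by
    rw [segment_eq_Icc (by gcongr; exact hd₁.trans hd₂)]
    exact ⟨by gcongr, by gcongr; exact (abs_nonneg _).trans hd₁⟩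
  have ht' := rpow_sub_two_mul_self (by linarith : p ≠ 1) ht
  have hs' := rpow_sub_two_mul_self (by linarith : p ≠ 1) hs
  rw [← sq_rpow_div_two ((abs_nonneg _).trans hd₁)]
  refine hf.le_of_concaveOn_of_mem_segment hg (mem_Ici.mpr (sq_nonneg _))
    (mem_Ici.mpr (sq_nonneg _)) hw ?_ ?_
  · calc 2 ^ (2 - p) * (|t - s| ^ 2) ^ (p / 2) ≤ |t - s| ^ p := by
          rw [sq_rpow_div_two (abs_nonneg _)]
          exact mul_le_of_le_one_left (by positivity)
            (rpow_le_one_of_one_le_of_nonpos one_le_two (by linarith))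
      _ ≤ (t ^ (p - 1) - s ^ (p - 1)) * (t - s) :=
          abs_sub_rpow_le_rpow_sub_rpow_mul_sub hp hs ht
      _ = B * |t - s| ^ 2 + A := by
          rw [sq_abs, ← ht', ← hs']
          ring
  · calc 2 ^ (2 - p) * ((t + s) ^ 2) ^ (p / 2) ≤ (t ^ (p - 1) + s ^ (p - 1)) * (t + s) := by
          rw [sq_rpow_div_two (by positivity)]
          exact two_rpow_mul_add_rpow_le hp hs ht
      _ = B * (t + s) ^ 2 + A := by
          rw [← ht', ← hs']
          ring

end Real

/-- Strong monotonicity of the p-Laplacian nonlinearity for `p ≥ 2`. -/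
theorem pLaplace_strong_monotonicity (n : ℕ) (p : ℝ) (hp : 2 ≤ p)
    (a b : EuclideanSpace ℝ (Fin n)) :
    (2 : ℝ) ^ (2 - p) * ‖b - a‖ ^ p ≤
      ⟪(‖b‖ ^ (p - 2)) • b - (‖a‖ ^ (p - 2)) • a, b - a⟫ := by
  rw [real_inner_smul_sub_smul_sub]
  exact Real.two_rpow_mul_rpow_le_of_abs_sub_le_of_le_add hp (norm_nonneg a) (norm_nonneg b)
    (abs_norm_sub_norm_le b a) (norm_sub_le b a)
end

section
/- For 1 < p < 2 and all vectors a, b in ℝⁿ with (a, b) ≠ (0, 0), the inequality (|b|^{p-2} b − |a|^{p-2} a) · (b − a) ≥ (p−1) |b − a|² / (|a| + |b|)^{2−p} holds. -/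
open scoped RealInnerProductSpace

open Real

/-!
With `s = ‖a‖`, `t = ‖b‖` and `c = ⟪a, b⟫`, both sides are affine in `c`, which ranges over
`[-s t, s t]`; so it suffices to check the two collinear cases `c = ± s t`. For `b` parallel to
`a` this is the tangent-line inequality of the concave map `x ↦ x ^ (p - 1)` together with
`(s + t) ^ (p - 2) ≤ max s t ^ (p - 2)`; for `b` antiparallel to `a` it is the subadditivity
`(s + t) ^ (p - 1) ≤ s ^ (p - 1) + t ^ (p - 1)`.
-/

theorem mul_le_of_abs_le_of_abs_mul_le {R : Type*} [Ring R] [LinearOrder R]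
    [IsStrictOrderedRing R] {α β c m : R} (hc : |c| ≤ m) (h : |β * m| ≤ α) : β * c ≤ α :=
  calc β * c ≤ |β| * |c| := (le_abs_self _).trans (abs_mul _ _).le
    _ ≤ |β| * m := by gcongr
    _ = |β * m| := by rw [abs_mul, abs_of_nonneg ((abs_nonneg c).trans hc)]
    _ ≤ α := h

namespace Real

theorem rpow_le_rpow_add_mul_sub {q s t : ℝ} (hq0 : 0 ≤ q) (hq1 : q ≤ 1) (hs : 0 < s)
    (ht : 0 ≤ t) : t ^ q ≤ s ^ q + q * s ^ (q - 1) * (t - s) := by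
  have h := rpow_one_add_le_one_add_mul_self (s := t / s - 1)
    (by linarith [div_nonneg ht hs.le]) hq0 hq1
  rw [add_sub_cancel, div_rpow ht hs.le, div_le_iff₀ (rpow_pos_of_pos hs q)] at h
  calc t ^ q ≤ (1 + q * (t / s - 1)) * s ^ q := h
    _ = s ^ q + q * s ^ (q - 1) * (t - s) := by
      rw [rpow_sub_one hs.ne']; field_simp

end Real

namespace PLaplace

variable {p s t : ℝ}

theorem scalar_bound_parallel (hp1 : 1 ≤ p) (hp2 : p ≤ 2) (hs : 0 ≤ s) (ht : 0 ≤ t)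
    (hst : 0 < s + t) :
    (p - 1) * (s + t) ^ (p - 2) * (s - t) ^ 2 ≤ (s ^ (p - 1) - t ^ (p - 1)) * (s - t) := by
  wlog hts : t ≤ s generalizing s t
  · have := this ht hs (by linarith) (by linarith)
    rw [add_comm t s] at this
    linear_combination this
  have hs' : 0 < s := by linarith
  have htan := rpow_le_rpow_add_mul_sub (q := p - 1) (by linarith) (by linarith) hs' ht
  rw [show p - 1 - 1 = p - 2 by ring] at htan
  have hpow : (s + t) ^ (p - 2) ≤ s ^ (p - 2) :=
    rpow_le_rpow_of_nonpos hs' (by linarith) (by linarith)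
  calc (p - 1) * (s + t) ^ (p - 2) * (s - t) ^ 2
      ≤ (p - 1) * s ^ (p - 2) * (s - t) * (s - t) := by
        rw [mul_assoc _ (s - t), ← sq]
        gcongr
    _ ≤ (s ^ (p - 1) - t ^ (p - 1)) * (s - t) := by
        gcongr
        linarith

theorem scalar_bound_antiparallel (hp1 : 1 ≤ p) (hp2 : p ≤ 2) (hs : 0 ≤ s) (ht : 0 ≤ t)
    (hst : 0 < s + t) :
    (p - 1) * (s + t) ^ (p - 2) * (s + t) ^ 2 ≤ (s ^ (p - 1) + t ^ (p - 1)) * (s + t) := by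
  calc (p - 1) * (s + t) ^ (p - 2) * (s + t) ^ 2 = (p - 1) * (s + t) ^ (p - 1) * (s + t) := by
        rw [show p - 1 = p - 2 + 1 by ring, rpow_add_one hst.ne']; ring
    _ ≤ 1 * (s + t) ^ (p - 1) * (s + t) := by gcongr; linarith
    _ ≤ (s ^ (p - 1) + t ^ (p - 1)) * (s + t) := by
        rw [one_mul]
        gcongr
        exact rpow_add_le_add_rpow hs ht (by linarith) (by linarith)

theorem scalar_bound {c : ℝ} (hp1 : 1 < p) (hp2 : p ≤ 2) (hs : 0 ≤ s) (ht : 0 ≤ t)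
    (hst : 0 < s + t) (hc : |c| ≤ s * t) :
    (p - 1) * (s + t) ^ (p - 2) * (s ^ 2 + t ^ 2 - 2 * c) ≤
      s ^ (p - 2) * s ^ 2 + t ^ (p - 2) * t ^ 2 - (s ^ (p - 2) + t ^ (p - 2)) * c := by
  have rpow_mul_self {x : ℝ} (hx : 0 ≤ x) : x ^ (p - 2) * x = x ^ (p - 1) := by
    rw [← rpow_add_one' hx (by linarith)]; ring_nf
  have hsp := rpow_mul_self hs
  have htp := rpow_mul_self ht
  have parallel := scalar_bound_parallel hp1.le hp2 hs ht hst
  have antiparallel := scalar_bound_antiparallel hp1.le hp2 hs ht hst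
  have affine := mul_le_of_abs_le_of_abs_mul_le hc
    (β := s ^ (p - 2) + t ^ (p - 2) - 2 * (p - 1) * (s + t) ^ (p - 2))
    (α := s ^ (p - 1) * s + t ^ (p - 1) * t - (p - 1) * (s + t) ^ (p - 2) * (s ^ 2 + t ^ 2))
    (abs_le.2 ⟨by linear_combination antiparallel - t * hsp - s * htp,
      by linear_combination parallel + t * hsp + s * htp⟩)
  linear_combination affine - s * hsp - t * htp

end PLaplace

/-- Monotonicity of the p-Laplacian nonlinearity in the singular regime `1 < p < 2`. -/
theorem pLaplace_monotonicity_singular (n : ℕ) (p : ℝ) (hp1 : 1 < p) (hp2 : p < 2)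
    (a b : EuclideanSpace ℝ (Fin n)) (hab : ¬(a = 0 ∧ b = 0)) :
    (p - 1) * ‖b - a‖ ^ (2 : ℝ) / (‖a‖ + ‖b‖) ^ (2 - p) ≤
      ⟪(‖b‖ ^ (p - 2)) • b - (‖a‖ ^ (p - 2)) • a, b - a⟫ := by
  have hst : 0 < ‖a‖ + ‖b‖ := by
    rcases not_and_or.1 hab with ha | hb
    · linarith [norm_pos_iff.2 ha, norm_nonneg b]
    · linarith [norm_pos_iff.2 hb, norm_nonneg a]
  have hinner : ⟪(‖b‖ ^ (p - 2)) • b - (‖a‖ ^ (p - 2)) • a, b - a⟫ =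
      ‖a‖ ^ (p - 2) * ‖a‖ ^ 2 + ‖b‖ ^ (p - 2) * ‖b‖ ^ 2
        - (‖a‖ ^ (p - 2) + ‖b‖ ^ (p - 2)) * ⟪a, b⟫ := by
    simp only [inner_sub_left, inner_sub_right, real_inner_smul_left, real_inner_self_eq_norm_sq,
      real_inner_comm b a]
    ring
  have hnorm : ‖b - a‖ ^ (2 : ℝ) = ‖a‖ ^ 2 + ‖b‖ ^ 2 - 2 * ⟪a, b⟫ := by
    rw [rpow_two, norm_sub_sq_real, real_inner_comm b a]; ring
  rw [hinner, hnorm, div_eq_mul_inv, ← rpow_neg hst.le, neg_sub, mul_right_comm]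
  exact PLaplace.scalar_bound hp1 hp2.le (norm_nonneg a) (norm_nonneg b) hst
    (abs_real_inner_le_norm a b)
end
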